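/- arXiv:1504.03224 — 5 statements merged into one kernel-verified Lean document; each statement's English description precedes it below -/
import Mathlib

section
/- If G is the complement of a connected triangle-free graph with at least 2 edges, then G contains no k-dominating independent set for any k > 1. -/
open Finset
open scoped Classical

noncomputable section

/-- `D` is a `k`-dominating independent set of `G`: `D` is independent and every
vertex outside `D` has at least `k` neighbors in `D`. -/
def IsKDIS {V : Type*} [Fintype V] (G : SimpleGraph V) (k : ℕ) (D : Finset V) : Prop :=
  (∀ u ∈ D, ∀ v ∈ D, ¬ G.Adj u v) ∧ ∀ v : V, v ∉ D → k ≤ (D.filter fun u => G.Adj v u).card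

/-- The number of `k`-dominating independent sets of `G`. -/
def numKDIS {V : Type*} [Fintype V] (G : SimpleGraph V) (k : ℕ) : ℕ :=
  ((univ : Finset (Finset V)).filter fun D => IsKDIS G k D).card

/-- The complement of a connected triangle-free graph with at least two edges has
no k-dominating independent set for k > 1. -/
theorem no_kDIS_complement_triangleFree {V : Type*} [Fintype V]
    (H : SimpleGraph V) (hconn : H.Connected) (htf : H.CliqueFree 3)
    (hedges : 2 ≤ H.edgeFinset.card) (k : ℕ) (hk : 1 < k) :
    ¬ ∃ D : Finset V, IsKDIS Hᶜ k D := by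
  rintro ⟨D, hind, hdom⟩
  -- H has an edge
  have hadj : ∃ x y : V, H.Adj x y := by
    obtain ⟨e, he⟩ : H.edgeFinset.Nonempty := card_pos.mp (by omega)
    rw [SimpleGraph.mem_edgeFinset] at he
    revert he
    refine Sym2.ind (fun x y he => ?_) e
    exact ⟨x, y, by simpa using he⟩
  -- D is a clique in H
  have hclq : ∀ u ∈ D, ∀ v ∈ D, u ≠ v → H.Adj u v := by
    intro u hu v hv huv
    have h := hind u hu v hv
    rw [SimpleGraph.compl_adj] at h
    push_neg at h
    exact h huv
  -- |D| ≤ 2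
  have hle : D.card ≤ 2 := by
    by_contra h
    push_neg at h
    obtain ⟨T, hTD, hT3⟩ := Finset.exists_subset_card_eq (show 3 ≤ D.card by omega)
    refine htf T ⟨?_, hT3⟩
    intro u hu v hv huv
    exact hclq u (hTD hu) v (hTD hv) huv
  -- |D| ≥ 2
  have hge : 2 ≤ D.card := by
    by_contra h
    push_neg at h
    by_cases hv : ∃ v, v ∉ D
    · obtain ⟨v, hv⟩ := hv
      have h1 := hdom v hv
      have h2 : k ≤ D.card := h1.trans (card_le_card (@filter_subset V (fun u => Hᶜ.Adj v u) (fun a => Classical.propDecidable _) D))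
      omega
    · push_neg at hv
      obtain ⟨x, y, hxy⟩ := hadj
      exact hxy.ne (Finset.card_le_one.mp (by omega) x (hv x) y (hv y))
  have hDcard : D.card = 2 := le_antisymm hle hge
  obtain ⟨a, b, hab', hD⟩ := Finset.card_eq_two.mp hDcard
  have haD : a ∈ D := by simp [hD]
  have hbD : b ∈ D := by simp [hD]
  have hab : H.Adj a b := hclq a haD b hbD hab'
  -- every vertex outside D is nonadjacent in H to a and b
  have hout : ∀ v, v ∉ D → ¬ H.Adj v a ∧ ¬ H.Adj v b := by
    intro v hv
    have h1 := hdom v hv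
    have h2 := Finset.eq_of_subset_of_card_le (@filter_subset V (fun u => Hᶜ.Adj v u) (fun a => Classical.propDecidable _) D)
      (by rw [hDcard]; exact lt_of_lt_of_le hk h1)
    constructor
    · have ha' := h2 ▸ haD
      simp only [Finset.mem_filter] at ha'
      exact ha'.2.2
    · have hb' := h2 ▸ hbD
      simp only [Finset.mem_filter] at hb'
      exact hb'.2.2
  have honly : ∀ w, H.Adj a w → w = b := by
    intro w hw
    by_contra hwb
    have hwa : w ≠ a := fun h => H.irrefl (h ▸ hw)
    have hwD : w ∉ D := by simp [hD, hwa, hwb]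
    exact (hout w hwD).1 hw.symm
  have honlyb : ∀ w, H.Adj b w → w = a := by
    intro w hw
    by_contra hwa
    have hwb : w ≠ b := fun h => H.irrefl (h ▸ hw)
    have hwD : w ∉ D := by simp [hD, hwa, hwb]
    exact (hout w hwD).2 hw.symm
  -- every vertex is a or b
  have key : ∀ u v : V, H.Walk u v → u = a ∨ u = b → v = a ∨ v = b := by
    intro u v p
    induction p with
    | nil => exact id
    | cons h p ih =>
      rintro (rfl | rfl)
      · exact ih (Or.inr (honly _ h))
      · exact ih (Or.inl (honlyb _ h))
  have hall : ∀ v : V, v = a ∨ v = b := by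
    intro v
    obtain ⟨p⟩ := hconn.preconnected a v
    exact key a v p (Or.inl rfl)
  -- then H has at most one edge
  have hsub : H.edgeFinset ⊆ {s(a, b)} := by
    intro e he
    rw [SimpleGraph.mem_edgeFinset] at he
    revert he
    refine Sym2.ind (fun x y he => ?_) e
    rw [mem_singleton]
    rw [SimpleGraph.mem_edgeSet] at he
    rcases hall x with rfl | rfl <;> rcases hall y with rfl | rfl
    · exact absurd he (H.irrefl)
    · rfl
    · exact Sym2.eq_swap
    · exact absurd he (H.irrefl)
  have h := (card_le_card hsub).trans (le_of_eq (card_singleton _))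
  omega
end
end

section
/- For k > 1, if a forest has a k-dominating independent set, then this set is unique; that is, a forest has at most one k-dominating independent set. -/
open Finset
open scoped Classical

noncomputable section

/-- In an acyclic graph, a set in which every vertex has at least two neighbors
inside the set must be empty. -/
lemma acyclic_no_min_deg_two {V : Type*} [Fintype V] (G : SimpleGraph V)
    (hG : G.IsAcyclic) (S : Finset V)
    (hS : ∀ v ∈ S, 2 ≤ (S.filter fun u => G.Adj v u).card) : S = ∅ := by
  by_contra hne
  obtain ⟨s, hs⟩ := Finset.nonempty_iff_ne_empty.mpr hne
  have key : ∀ n : ℕ, ∃ (a b : V) (p : G.Walk a b),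
      p.IsPath ∧ (∀ v ∈ p.support, v ∈ S) ∧ p.length = n := by
    intro n
    induction n with
    | zero =>
      exact ⟨s, s, SimpleGraph.Walk.nil, SimpleGraph.Walk.IsPath.nil,
        by simp [hs], rfl⟩
    | succ n ih =>
      obtain ⟨a, b, p, hp, hsup, hlen⟩ := ih
      have haS : a ∈ S := hsup a p.start_mem_support
      have hcard := hS a haS
      have hex : ∃ c ∈ S, G.Adj a c ∧ c ∉ p.support := by
        by_contra hcon
        push_neg at hcon
        -- every neighbor of `a` inside `S` lies on the path
        cases p with
        | nil =>
          obtain ⟨c, hc⟩ := Finset.card_pos.mp (show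
            0 < (S.filter fun u => G.Adj a u).card by omega)
          rw [Finset.mem_filter] at hc
          have := hcon c hc.1 hc.2
          simp only [SimpleGraph.Walk.support_nil, List.mem_singleton] at this
          exact hc.2.ne' (this ▸ rfl)
        | cons h' p' =>
          rename_i d
          -- find a neighbor `c ≠ d` of `a` in `S`
          obtain ⟨c₁, hc₁, c₂, hc₂, h12⟩ := Finset.one_lt_card.mp (by omega :
            1 < (S.filter fun u => G.Adj a u).card)
          have : ∃ c, c ∈ (S.filter fun u => G.Adj a u) ∧ c ≠ d := by
            by_cases h : c₁ = d
            · exact ⟨c₂, hc₂, fun hh => h12 (by rw [h, hh])⟩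
            · exact ⟨c₁, hc₁, h⟩
          obtain ⟨c, hc, hcd⟩ := this
          rw [Finset.mem_filter] at hc
          have hac : G.Adj a c := hc.2
          have hcsup : c ∈ (SimpleGraph.Walk.cons h' p').support :=
            hcon c hc.1 hac
          -- two distinct paths from `a` to `c` : contradiction with acyclicity
          set p : G.Walk a b := SimpleGraph.Walk.cons h' p' with hpdef
          have hP1 : (p.takeUntil c hcsup).IsPath := hp.takeUntil hcsup
          have huniq := SimpleGraph.isAcyclic_iff_path_unique.mp hG
            ⟨p.takeUntil c hcsup, hP1⟩ (SimpleGraph.Path.singleton hac)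
          have hval : p.takeUntil c hcsup =
              SimpleGraph.Walk.cons hac SimpleGraph.Walk.nil :=
            congrArg Subtype.val huniq
          have hspec := p.take_spec hcsup
          rw [hval] at hspec
          -- compare second vertices
          have := congrArg (fun q => SimpleGraph.Walk.getVert q 1) hspec
          simp only [SimpleGraph.Walk.cons_append, SimpleGraph.Walk.nil_append,
            SimpleGraph.Walk.getVert_cons_succ, SimpleGraph.Walk.getVert_zero,
            hpdef] at this
          exact hcd this
      obtain ⟨c, hcS, hac, hcp⟩ := hex
      refine ⟨c, b, SimpleGraph.Walk.cons hac.symm p, ?_, ?_, by simp [hlen]⟩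
      · rw [SimpleGraph.Walk.cons_isPath_iff]; exact ⟨hp, hcp⟩
      · intro v hv
        rw [SimpleGraph.Walk.support_cons, List.mem_cons] at hv
        rcases hv with rfl | hv
        · exact hcS
        · exact hsup v hv
  obtain ⟨a, b, p, hp, _, hlen⟩ := key (Fintype.card V)
  have := hp.length_lt
  omega

/-- A forest has at most one k-dominating independent set when k > 1. -/
theorem forest_kDIS_unique {V : Type*} [Fintype V] (G : SimpleGraph V)
    (hG : G.IsAcyclic) (k : ℕ) (hk : 1 < k) (D₁ D₂ : Finset V)
    (h₁ : IsKDIS G k D₁) (h₂ : IsKDIS G k D₂) : D₁ = D₂ := by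
  set S : Finset V := (D₁ \ D₂) ∪ (D₂ \ D₁) with hSdef
  have hmain : ∀ v ∈ S, 2 ≤ (S.filter fun u => G.Adj v u).card := by
    intro v hv
    rw [hSdef, Finset.mem_union, Finset.mem_sdiff, Finset.mem_sdiff] at hv
    rcases hv with ⟨hv1, hv2⟩ | ⟨hv2, hv1⟩
    · have hk' : k ≤ (D₂.filter fun u => G.Adj v u).card := h₂.2 v hv2
      have hsub : (D₂.filter fun u => G.Adj v u) ⊆ (S.filter fun u => G.Adj v u) := by
        intro u hu
        rw [Finset.mem_filter] at hu ⊢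
        refine ⟨?_, hu.2⟩
        have hu1 : u ∉ D₁ := fun huD₁ => h₁.1 v hv1 u huD₁ hu.2
        exact Finset.mem_union_right _ (Finset.mem_sdiff.mpr ⟨hu.1, hu1⟩)
      calc 2 ≤ k := hk
        _ ≤ _ := hk'
        _ ≤ _ := Finset.card_le_card hsub
    · have hk' : k ≤ (D₁.filter fun u => G.Adj v u).card := h₁.2 v hv1
      have hsub : (D₁.filter fun u => G.Adj v u) ⊆ (S.filter fun u => G.Adj v u) := by
        intro u hu
        rw [Finset.mem_filter] at hu ⊢
        refine ⟨?_, hu.2⟩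
        have hu2 : u ∉ D₂ := fun huD₂ => h₂.1 v hv2 u huD₂ hu.2
        exact Finset.mem_union_left _ (Finset.mem_sdiff.mpr ⟨hu.1, hu2⟩)
      calc 2 ≤ k := hk
        _ ≤ _ := hk'
        _ ≤ _ := Finset.card_le_card hsub
  have hSempty : S = ∅ := acyclic_no_min_deg_two G hG S hmain
  rw [hSdef, Finset.union_eq_empty, Finset.sdiff_eq_empty_iff_subset,
    Finset.sdiff_eq_empty_iff_subset] at hSempty
  exact Finset.Subset.antisymm hSempty.1 hSempty.2
end
end

section
/- The number of (not necessarily linear) ternary MDS codes with parameters (k, 3^{k-1}, 2)_3, i.e., subsets C ⊆ F_3^k with |C| = 3^{k-1} and minimum Hamming distance at least 2, is exactly 3·2^{k-1} for every k ≥ 1. -/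
open Finset
open scoped Classical

noncomputable section

lemma dist_cons {n : ℕ} (a b : ZMod 3) (x y : Fin n → ZMod 3) :
    hammingDist (Fin.cons a x : Fin (n+1) → ZMod 3) (Fin.cons b y) = (if a = b then 0 else 1) + hammingDist x y := by
  simp only [hammingDist, Finset.card_filter, Fin.sum_univ_succ, Fin.cons_zero, Fin.cons_succ]
  by_cases h : a = b <;> simp [h]

lemma structureBf : ∀ (n : ℕ) (f : (Fin n → ZMod 3) → ZMod 3),
    (∀ x y, hammingDist x y = 1 → f x ≠ f y) →
    ∃ (μ : Fin n → ZMod 3) (c : ZMod 3), (∀ i, μ i ≠ 0) ∧ ∀ x, f x = c + ∑ i, μ i * x i := by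
  intro n
  induction n with
  | zero =>
    intro f _
    refine ⟨fun i => i.elim0, f (fun i => i.elim0), fun i => i.elim0, fun x => ?_⟩
    have hx : x = fun i => i.elim0 := funext fun i => i.elim0
    simp [hx]
  | succ n ih =>
    intro f hf
    set b : (Fin n → ZMod 3) → ZMod 3 := fun y => f (Fin.cons 0 y) with hbdef
    set g : (Fin n → ZMod 3) → ZMod 3 := fun y => f (Fin.cons 1 y) with hgdef
    have hb : ∀ y z, hammingDist y z = 1 → b y ≠ b z := by
      intro y z hyz
      exact hf _ _ (by rw [dist_cons]; simp [hyz])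
    have hg : ∀ y z, hammingDist y z = 1 → g y ≠ g z := by
      intro y z hyz
      exact hf _ _ (by rw [dist_cons]; simp [hyz])
    obtain ⟨μb, cb, hμb, Hb⟩ := ih b hb
    obtain ⟨μg, cg, hμg, Hg⟩ := ih g hg
    have claim1 : ∀ y, g y ≠ b y := by
      intro y
      apply hf
      rw [dist_cons]
      simp [hammingDist_self]
    have claim2 : μg = μb := by
      funext j
      by_contra h
      have hd : μg j - μb j ≠ 0 := sub_ne_zero.mpr h
      obtain ⟨t, ht⟩ : ∃ t : ZMod 3, (μg j - μb j) * t = cb - cg := by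
        have : ∀ d e : ZMod 3, d ≠ 0 → ∃ t, d * t = e := by decide
        exact this _ _ hd
      set y : Fin n → ZMod 3 := Pi.single j t with hy
      have hsum : ∀ μ : Fin n → ZMod 3, ∑ i, μ i * y i = μ j * t := by
        intro μ
        rw [Finset.sum_eq_single j]
        · simp [hy]
        · intro i _ hij; simp [hy, Pi.single_eq_of_ne hij]
        · simp
      have : g y = b y := by
        rw [Hg, Hb, hsum, hsum]
        have : (μg j - μb j) * t = μg j * t - μb j * t := by ring
        rw [this] at ht
        linear_combination ht
      exact claim1 y this
    rw [claim2] at Hg hμg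
    have ha : cg - cb ≠ 0 := by
      have := claim1 0
      rw [Hg, Hb] at this
      simp at this
      exact sub_ne_zero.mpr this
    have key : ∀ (a p v : ZMod 3), a ≠ 0 → v ≠ p → v ≠ p + a → v = p + 2 * a := by decide
    have claim3 : ∀ (y : Fin n → ZMod 3) (t : ZMod 3),
        f (Fin.cons t y) = cb + (cg - cb) * t + ∑ i, μb i * y i := by
      intro y t
      have h0 : f (Fin.cons 0 y) = cb + ∑ i, μb i * y i := Hb y
      have h1 : f (Fin.cons 1 y) = cg + ∑ i, μb i * y i := Hg y
      have hcases : ∀ s : ZMod 3, s = 0 ∨ s = 1 ∨ s = 2 := by decide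
      rcases hcases t with rfl | rfl | rfl
      · rw [h0]; ring
      · rw [h1]; ring
      · have hne0 : f (Fin.cons (2:ZMod 3) y) ≠ f (Fin.cons 0 y) := by
          apply hf; rw [dist_cons]; simp [hammingDist_self]; decide
        have hne1 : f (Fin.cons (2:ZMod 3) y) ≠ f (Fin.cons 1 y) := by
          apply hf; rw [dist_cons]; simp [hammingDist_self]; decide
        rw [h0] at hne0
        rw [h1] at hne1
        have := key (cg - cb) (cb + ∑ i, μb i * y i) (f (Fin.cons 2 y)) ha hne0
          (by rw [show cb + ∑ i, μb i * y i + (cg - cb) = cg + ∑ i, μb i * y i by ring]; exact hne1)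
        rw [this]; ring
    refine ⟨Fin.cons (cg - cb) μb, cb, ?_, ?_⟩
    · intro i
      refine Fin.cases ?_ ?_ i
      · simpa using ha
      · intro j; simpa using hμb j
    · intro x
      have hx : x = Fin.cons (x 0) (Fin.tail x) := (Fin.cons_self_tail x).symm
      rw [hx, claim3, Fin.sum_univ_succ]
      simp [Fin.tail]
      ring

def myCode (n : ℕ) (μ : Fin n → ZMod 3) (c : ZMod 3) : Finset (Fin (n+1) → ZMod 3) :=
  univ.filter fun x => ∑ i, (Fin.cons 1 μ : Fin (n+1) → ZMod 3) i * x i = c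

lemma mem_myCode {n : ℕ} {μ : Fin n → ZMod 3} {c : ZMod 3} {x : Fin (n+1) → ZMod 3} :
    x ∈ myCode n μ c ↔ x 0 + ∑ i, μ i * x i.succ = c := by
  simp [myCode, Fin.sum_univ_succ]

lemma myCode_card (n : ℕ) (μ : Fin n → ZMod 3) (c : ZMod 3) :
    (myCode n μ c).card = 3 ^ n := by
  have himg : myCode n μ c =
      (univ : Finset (Fin n → ZMod 3)).image
        (fun u => (Fin.cons (c - ∑ i, μ i * u i) u : Fin (n+1) → ZMod 3)) := by
    ext x
    rw [mem_myCode, Finset.mem_image]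
    constructor
    · intro hx
      refine ⟨Fin.tail x, mem_univ _, ?_⟩
      have : c - ∑ i, μ i * Fin.tail x i = x 0 := by
        have h2 : ∑ i, μ i * Fin.tail x i = ∑ i, μ i * x i.succ := rfl
        rw [h2, ← hx]; ring
      rw [this]
      exact Fin.cons_self_tail x
    · rintro ⟨u, _, rfl⟩
      simp [Fin.cons_zero, Fin.cons_succ]
  rw [himg, Finset.card_image_of_injective _ ?_, Finset.card_univ]
  · simp [Fintype.card_fun]
  · intro u v huv
    have := congrArg Fin.tail huv
    simpa [Fin.tail_cons] using this

lemma myCode_dist {n : ℕ} {μ : Fin n → ZMod 3} (hμ : ∀ i, μ i ≠ 0) (c : ZMod 3) :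
    ∀ x ∈ myCode n μ c, ∀ y ∈ myCode n μ c, x ≠ y → 2 ≤ hammingDist x y := by
  intro x hx y hy hxy
  by_contra hlt
  push_neg at hlt
  have h1 : hammingDist x y = 1 := by
    have := hammingDist_pos.mpr hxy
    omega
  have hcard : ({i | x i ≠ y i} : Finset (Fin (n+1))).card = 1 := h1
  obtain ⟨j, hj⟩ := Finset.card_eq_one.mp hcard
  have hjj : x j ≠ y j := by
    have : j ∈ ({i | x i ≠ y i} : Finset (Fin (n+1))) := hj ▸ Finset.mem_singleton_self j
    simpa using this
  have hother : ∀ i, i ≠ j → x i = y i := by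
    intro i hij
    by_contra hne
    have : i ∈ ({i | x i ≠ y i} : Finset (Fin (n+1))) := by simpa using hne
    rw [hj] at this
    exact hij (Finset.mem_singleton.mp this)
  have hlam : ∀ i : Fin (n+1), (Fin.cons 1 μ : Fin (n+1) → ZMod 3) i ≠ 0 := by
    intro i
    refine Fin.cases ?_ ?_ i
    · simp
    · intro k; simpa using hμ k
  simp only [myCode, Finset.mem_filter] at hx hy
  have hsum : ∑ i, (Fin.cons 1 μ : Fin (n+1) → ZMod 3) i * (x i - y i) = 0 := by
    have : ∑ i, (Fin.cons 1 μ : Fin (n+1) → ZMod 3) i * (x i - y i)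
        = (∑ i, (Fin.cons 1 μ : Fin (n+1) → ZMod 3) i * x i)
          - ∑ i, (Fin.cons 1 μ : Fin (n+1) → ZMod 3) i * y i := by
      rw [← Finset.sum_sub_distrib]; congr 1; funext i; ring
    rw [this, hx.2, hy.2, sub_self]
  rw [Finset.sum_eq_single j] at hsum
  · have : (Fin.cons 1 μ : Fin (n+1) → ZMod 3) j * (x j - y j) ≠ 0 :=
      mul_ne_zero (hlam j) (sub_ne_zero.mpr hjj)
    exact this hsum
  · intro i _ hij
    rw [hother i hij, sub_self, mul_zero]
  · simp

lemma myCode_complete {n : ℕ} {C : Finset (Fin (n+1) → ZMod 3)} (hcard : C.card = 3 ^ n)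
    (hdist : ∀ x ∈ C, ∀ y ∈ C, x ≠ y → 2 ≤ hammingDist x y) :
    ∃ μ c, (∀ i, μ i ≠ 0) ∧ C = myCode n μ c := by
  have hinj : ∀ x ∈ C, ∀ y ∈ C, Fin.tail x = Fin.tail y → x = y := by
    intro x hx y hy ht
    by_contra hne
    have h2 := hdist x hx y hy hne
    have hsub : ({i | x i ≠ y i} : Finset (Fin (n+1))) ⊆ {0} := by
      intro i hi
      simp only [Finset.mem_filter] at hi
      rw [Finset.mem_singleton]
      by_contra h0
      obtain ⟨k, rfl⟩ := Fin.exists_succ_eq.mpr h0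
      exact hi.2 (by rw [show x k.succ = Fin.tail x k from rfl, ht]; rfl)
    have : hammingDist x y ≤ 1 := by
      have := Finset.card_le_card hsub
      simpa [hammingDist] using this
    omega
  have himgcard : (C.image Fin.tail).card = 3 ^ n := by
    rw [Finset.card_image_of_injOn (fun x hx y hy => hinj x hx y hy), hcard]
  have himg : C.image Fin.tail = univ := by
    apply Finset.eq_univ_of_card
    rw [himgcard]
    simp [Fintype.card_fun]
  have hsurj : ∀ u : Fin n → ZMod 3, ∃ x, x ∈ C ∧ Fin.tail x = u := by
    intro u
    have : u ∈ C.image Fin.tail := himg ▸ mem_univ u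
    obtain ⟨x, hx, hxu⟩ := Finset.mem_image.mp this
    exact ⟨x, hx, hxu⟩
  choose X hXC hXt using hsurj
  set f : (Fin n → ZMod 3) → ZMod 3 := fun u => X u 0 with hfdef
  have hXeq : ∀ u, X u = Fin.cons (f u) u := by
    intro u
    have h1 : X u = Fin.cons (X u 0) (Fin.tail (X u)) := (Fin.cons_self_tail (X u)).symm
    rw [hXt] at h1
    exact h1
  have hmem : ∀ x : Fin (n+1) → ZMod 3, x ∈ C ↔ x 0 = f (Fin.tail x) := by
    intro x
    constructor
    · intro hx
      have hxe := hinj x hx (X (Fin.tail x)) (hXC _) (by rw [hXt])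
      conv_lhs => rw [hxe]
    · intro h0
      have : x = X (Fin.tail x) := by
        rw [hXeq, ← h0]
        exact (Fin.cons_self_tail x).symm
      rw [this]; exact hXC _
  have hline : ∀ u v, hammingDist u v = 1 → f u ≠ f v := by
    intro u v huv hfeq
    have hune : u ≠ v := by
      intro h; rw [h, hammingDist_self] at huv; exact one_ne_zero huv.symm
    have hXne : X u ≠ X v := by
      intro h
      apply hune
      rw [← hXt u, ← hXt v, h]
    have := hdist (X u) (hXC u) (X v) (hXC v) hXne
    rw [hXeq, hXeq, dist_cons, hfeq, if_pos rfl, huv] at this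
    omega
  obtain ⟨μ, c, hμ, Hf⟩ := structureBf n f hline
  refine ⟨-μ, c, fun i => by simpa using hμ i, ?_⟩
  ext x
  rw [hmem, mem_myCode, Hf]
  have h2 : ∑ i, (-μ) i * x i.succ = -∑ i, μ i * Fin.tail x i := by
    rw [← Finset.sum_neg_distrib]
    refine Finset.sum_congr rfl fun i _ => ?_
    show -μ i * x i.succ = -(μ i * x i.succ)
    ring
  rw [h2]
  constructor
  · intro h; rw [h]; ring
  · intro h; linear_combination h

lemma myCode_inj {n : ℕ} {μ μ' : Fin n → ZMod 3} {c c' : ZMod 3}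
    (h : myCode n μ c = myCode n μ' c') : μ = μ' ∧ c = c' := by
  have hc : c = c' := by
    have hx : (Fin.cons c 0 : Fin (n+1) → ZMod 3) ∈ myCode n μ c := by
      rw [mem_myCode]; simp
    rw [h, mem_myCode] at hx
    simpa using hx
  refine ⟨funext fun j => ?_, hc⟩
  have hx : (Fin.cons (c - μ j) (Pi.single j 1) : Fin (n+1) → ZMod 3) ∈ myCode n μ c := by
    rw [mem_myCode]
    simp only [Fin.cons_zero, Fin.cons_succ]
    rw [Finset.sum_eq_single j]
    · simp
    · intro i _ hij; simp [Pi.single_eq_of_ne hij]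
    · simp
  rw [h, mem_myCode] at hx
  simp only [Fin.cons_zero, Fin.cons_succ] at hx
  rw [Finset.sum_eq_single j] at hx
  · rw [← hc] at hx; simp at hx; linear_combination -hx
  · intro i _ hij; simp [Pi.single_eq_of_ne hij]
  · simp

/-- The number of (not necessarily linear) ternary MDS codes with parameters
(k, 3^(k-1), 2)_3 is exactly 3 * 2^(k-1). -/
theorem card_ternary_MDS (k : ℕ) (hk : 1 ≤ k) :
    ((univ : Finset (Finset (Fin k → ZMod 3))).filter fun C =>
        C.card = 3 ^ (k - 1) ∧
        ∀ x ∈ C, ∀ y ∈ C, x ≠ y → 2 ≤ hammingDist x y).card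
      = 3 * 2 ^ (k - 1) := by
  obtain ⟨n, rfl⟩ : ∃ n, k = n + 1 := ⟨k - 1, by omega⟩
  simp only [Nat.add_sub_cancel]
  have hset : ((univ : Finset (Finset (Fin (n+1) → ZMod 3))).filter fun C =>
        C.card = 3 ^ n ∧ ∀ x ∈ C, ∀ y ∈ C, x ≠ y → 2 ≤ hammingDist x y)
      = (((univ : Finset (Fin n → ZMod 3)).filter fun μ => ∀ i, μ i ≠ 0) ×ˢ
          (univ : Finset (ZMod 3))).image fun p => myCode n p.1 p.2 := by
    ext C
    simp only [Finset.mem_filter, Finset.mem_image, Finset.mem_product, mem_univ, true_and]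
    constructor
    · rintro ⟨h1, h2⟩
      obtain ⟨μ, c, hμ, rfl⟩ := myCode_complete h1 h2
      exact ⟨⟨μ, c⟩, ⟨hμ, trivial⟩, rfl⟩
    · rintro ⟨⟨μ, c⟩, ⟨hμ, -⟩, rfl⟩
      exact ⟨myCode_card n μ c, myCode_dist hμ c⟩
  rw [hset, Finset.card_image_of_injOn (fun p _ q _ hpq => by
    obtain ⟨h1, h2⟩ := myCode_inj hpq
    exact Prod.ext h1 h2)]
  rw [Finset.card_product]
  have h1 : ((univ : Finset (Fin n → ZMod 3)).filter fun μ => ∀ i, μ i ≠ 0).card = 2 ^ n := by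
    have : ((univ : Finset (Fin n → ZMod 3)).filter fun μ => ∀ i, μ i ≠ 0)
        = Fintype.piFinset (fun _ : Fin n => ({1, 2} : Finset (ZMod 3))) := by
      ext μ
      simp only [Finset.mem_filter, mem_univ, true_and, Fintype.mem_piFinset]
      have hz : ∀ z : ZMod 3, z ≠ 0 ↔ z ∈ ({1, 2} : Finset (ZMod 3)) := by decide
      exact forall_congr' fun i => hz (μ i)
    rw [this, Fintype.card_piFinset]
    have h2 : ({1, 2} : Finset (ZMod 3)).card = 2 := by decide
    simp [h2]
  rw [h1]
  simp [ZMod.card]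
  ring
end
end

section
/- A subset D of the vertex set of (K_3)^k (the Hamming graph H(k,3)) is a k-dominating independent set if and only if D, viewed as a subset of F_3^k, is a (k, 3^{k-1}, 2)_3 MDS code, i.e., |D| = 3^{k-1} and any two distinct elements of D have Hamming distance at least 2. -/
open Finset
open scoped Classical

noncomputable section

/-- The Hamming graph H(k,3), i.e. the k-fold Cartesian product of K_3: vertices are
vectors of length k over the field with three elements, adjacent iff they differ in
exactly one coordinate. -/
def hammingGraph (k : ℕ) : SimpleGraph (Fin k → ZMod 3) where
  Adj x y := hammingDist x y = 1
  symm := ⟨fun x y h => by simpa only [hammingDist_comm] using h⟩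
  loopless := ⟨fun x h => by simp [hammingDist_self] at h⟩

section aux

variable {k : ℕ}

lemma aux_adj {x y : Fin k → ZMod 3} :
    (hammingGraph k).Adj x y ↔ hammingDist x y = 1 := Iff.rfl

lemma aux_dist_le_one {x y : Fin k → ZMod 3} {i : Fin k}
    (h : ∀ j, j ≠ i → x j = y j) : hammingDist x y ≤ 1 := by
  have hsub : (Finset.univ.filter fun j => x j ≠ y j) ⊆ ({i} : Finset (Fin k)) := by
    intro j hj
    simp only [mem_filter, mem_univ, true_and] at hj
    simp only [mem_singleton]
    by_contra hji
    exact hj (h j hji)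
  calc hammingDist x y = (Finset.univ.filter fun j => x j ≠ y j).card := rfl
    _ ≤ ({i} : Finset (Fin k)).card := card_le_card hsub
    _ = 1 := card_singleton i

lemma aux_dist_one {x y : Fin k → ZMod 3} (h : hammingDist x y = 1) :
    ∃ j, x j ≠ y j ∧ ∀ j', x j' ≠ y j' → j' = j := by
  have h' : (Finset.univ.filter fun j => x j ≠ y j).card = 1 := h
  obtain ⟨j, hj⟩ := Finset.card_eq_one.mp h'
  refine ⟨j, ?_, ?_⟩
  · have : j ∈ Finset.univ.filter fun j => x j ≠ y j := by rw [hj]; exact mem_singleton_self j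
    simpa using this
  · intro j' hj'
    have : j' ∈ Finset.univ.filter fun j => x j ≠ y j := by simpa using hj'
    rw [hj] at this
    simpa using this

lemma aux_eq_of_agree {D : Finset (Fin k → ZMod 3)}
    (hmds : ∀ x ∈ D, ∀ y ∈ D, x ≠ y → 2 ≤ hammingDist x y)
    {x y : Fin k → ZMod 3} (hx : x ∈ D) (hy : y ∈ D) {i : Fin k}
    (h : ∀ j, j ≠ i → x j = y j) : x = y := by
  by_contra hne
  have h1 := aux_dist_le_one h
  have h2 := hmds x hx y hy hne
  omega

lemma aux_card_T (i : Fin k) :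
    (Finset.univ.filter fun w : Fin k → ZMod 3 => w i = 0).card = 3 ^ (k - 1) := by
  have e : (Fin k → ZMod 3) ≃ ZMod 3 × {w : Fin k → ZMod 3 // w i = 0} :=
    { toFun := fun w => (w i, ⟨Function.update w i 0, Function.update_self i 0 w⟩)
      invFun := fun p => Function.update p.2.1 i p.1
      left_inv := fun w => by
        simp [Function.update_idem, Function.update_eq_self]
      right_inv := fun p => by
        refine Prod.ext (by simp) (Subtype.ext ?_)
        simp only [Function.update_idem]
        conv_rhs => rw [← Function.update_eq_self i p.2.1]
        rw [p.2.2] }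
  have hcard : Fintype.card (Fin k → ZMod 3)
      = 3 * Fintype.card {w : Fin k → ZMod 3 // w i = 0} := by
    rw [Fintype.card_congr e, Fintype.card_prod]
    congr 1
  have hful : Fintype.card (Fin k → ZMod 3) = 3 ^ k := by
    simp [Fintype.card_fun]
  have hk1 : 1 ≤ k := i.pos
  have hpow : 3 * 3 ^ (k - 1) = 3 ^ k := by
    rw [← pow_succ', Nat.sub_add_cancel hk1]
  have hfc : (Finset.univ.filter fun w : Fin k → ZMod 3 => w i = 0).card
      = Fintype.card {w : Fin k → ZMod 3 // w i = 0} := (Fintype.card_subtype _).symm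
  have h3 : 3 * Fintype.card {w : Fin k → ZMod 3 // w i = 0} = 3 * 3 ^ (k - 1) :=
    hcard.symm.trans (hful.trans hpow.symm)
  rw [hfc]
  exact Nat.eq_of_mul_eq_mul_left (by norm_num) h3

lemma aux_surj {D : Finset (Fin k → ZMod 3)}
    (hcard : D.card = 3 ^ (k - 1))
    (hmds : ∀ x ∈ D, ∀ y ∈ D, x ≠ y → 2 ≤ hammingDist x y)
    (i : Fin k) (w : Fin k → ZMod 3) (hw : w i = 0) :
    ∃ u ∈ D, Function.update u i 0 = w := by
  have hinj : Set.InjOn (fun x => Function.update x i 0) (↑D : Set (Fin k → ZMod 3)) := by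
    intro x hx y hy hxy
    refine aux_eq_of_agree hmds hx hy (i := i) fun j hj => ?_
    have := congrFun hxy j
    simpa [Function.update_of_ne hj] using this
  have hsub : D.image (fun x => Function.update x i 0)
      ⊆ Finset.univ.filter fun w : Fin k → ZMod 3 => w i = 0 := by
    intro w' hw'
    obtain ⟨x, _, rfl⟩ := Finset.mem_image.mp hw'
    simp
  have hcard2 : (Finset.univ.filter fun w : Fin k → ZMod 3 => w i = 0).card
      ≤ (D.image (fun x => Function.update x i 0)).card := by
    rw [Finset.card_image_of_injOn hinj, hcard, aux_card_T]
  have heq := Finset.eq_of_subset_of_card_le hsub hcard2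
  have hwmem : w ∈ D.image (fun x => Function.update x i 0) := by
    rw [heq]; simp [hw]
  obtain ⟨u, hu, huw⟩ := Finset.mem_image.mp hwmem
  exact ⟨u, hu, huw⟩

end aux

/-- A subset of the Hamming graph H(k,3) is a k-dominating independent set iff it is
a (k, 3^(k-1), 2)_3 MDS code. -/
theorem kDIS_iff_MDS (k : ℕ) (hk : 1 ≤ k) (D : Finset (Fin k → ZMod 3)) :
    IsKDIS (hammingGraph k) k D ↔
      D.card = 3 ^ (k - 1) ∧ ∀ x ∈ D, ∀ y ∈ D, x ≠ y → 2 ≤ hammingDist x y := by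
  constructor
  · rintro ⟨hind, hdom⟩
    have hmds : ∀ x ∈ D, ∀ y ∈ D, x ≠ y → 2 ≤ hammingDist x y := by
      intro x hx y hy hxy
      have h0 : hammingDist x y ≠ 0 := hammingDist_ne_zero.mpr hxy
      have h1 : hammingDist x y ≠ 1 := fun h => hind x hx y hy (aux_adj.mpr h)
      omega
    refine ⟨?_, hmds⟩
    set i0 : Fin k := ⟨0, hk⟩ with hi0
    have hT := aux_card_T (k := k) i0
    rw [← hT]
    refine Finset.card_bij (fun x _ => Function.update x i0 0) ?_ ?_ ?_
    · intro x hx; simp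
    · intro x hx y hy hxy
      refine aux_eq_of_agree hmds hx hy (i := i0) fun j hj => ?_
      have := congrFun hxy j
      simpa [Function.update_of_ne hj] using this
    · intro w hw
      have hw0 : w i0 = 0 := (Finset.mem_filter.mp hw).2
      by_cases hwD : w ∈ D
      · refine ⟨w, hwD, ?_⟩
        show Function.update w i0 0 = w
        funext j
        by_cases hj : j = i0
        · subst hj; rw [Function.update_self, hw0]
        · rw [Function.update_of_ne hj]
      · set N := D.filter fun u => (hammingGraph k).Adj w u with hN
        have hNk : k ≤ N.card := hdom w hwD
        set F : (Fin k → ZMod 3) → Fin k :=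
          fun u => if h : ∃ j, w j ≠ u j then h.choose else i0 with hF
        have hFprop : ∀ u ∈ N, w (F u) ≠ u (F u) ∧ ∀ j, j ≠ F u → w j = u j := by
          intro u hu
          have hadj : hammingDist w u = 1 :=
            aux_adj.mp (Finset.mem_filter.mp hu).2
          obtain ⟨j, hj1, hj2⟩ := aux_dist_one hadj
          have hex : ∃ j, w j ≠ u j := ⟨j, hj1⟩
          have hFu : F u = j := by
            rw [hF]; simp only [dif_pos hex]
            exact hj2 _ hex.choose_spec
          rw [hFu]
          exact ⟨hj1, fun j' hj' => by
            by_contra hne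
            exact hj' (hj2 j' hne)⟩
        have hFinj : Set.InjOn F N := by
          intro u1 hu1 u2 hu2 h12
          have hu1D : u1 ∈ D := (Finset.mem_filter.mp hu1).1
          have hu2D : u2 ∈ D := (Finset.mem_filter.mp hu2).1
          refine aux_eq_of_agree hmds hu1D hu2D (i := F u1) fun j hj => ?_
          have e1 := (hFprop u1 hu1).2 j hj
          have e2 := (hFprop u2 hu2).2 j (h12 ▸ hj)
          rw [← e1, e2]
        have himage : N.image F = Finset.univ := by
          refine Finset.eq_of_subset_of_card_le (Finset.subset_univ _) ?_
          rw [Finset.card_image_of_injOn hFinj, Finset.card_univ, Fintype.card_fin]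
          exact hNk
        have : i0 ∈ N.image F := by rw [himage]; exact mem_univ i0
        obtain ⟨u, hu, hFu⟩ := Finset.mem_image.mp this
        refine ⟨u, (Finset.mem_filter.mp hu).1, ?_⟩
        show Function.update u i0 0 = w
        funext j
        by_cases hj : j = i0
        · subst hj; rw [Function.update_self, hw0]
        · rw [Function.update_of_ne hj]
          exact ((hFprop u hu).2 j (hFu ▸ hj)).symm
  · rintro ⟨hcard, hmds⟩
    constructor
    · intro u hu v hv hadj
      have h1 : hammingDist u v = 1 := aux_adj.mp hadj
      have hne : u ≠ v := hammingDist_ne_zero.mp (by omega)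
      have := hmds u hu v hv hne
      omega
    · intro v hv
      have hsel : ∀ i : Fin k, ∃ u ∈ D, Function.update u i 0 = Function.update v i 0 :=
        fun i => aux_surj hcard hmds i (Function.update v i 0) (Function.update_self i 0 v)
      set g : Fin k → (Fin k → ZMod 3) := fun i => (hsel i).choose with hg
      have hgD : ∀ i, g i ∈ D := fun i => (hsel i).choose_spec.1
      have hgu : ∀ i, Function.update (g i) i 0 = Function.update v i 0 :=
        fun i => (hsel i).choose_spec.2
      have hagree : ∀ i, ∀ j, j ≠ i → g i j = v j := by
        intro i j hj
        have := congrFun (hgu i) j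
        simpa [Function.update_of_ne hj] using this
      have hgne : ∀ i, g i ≠ v := fun i h => hv (h ▸ hgD i)
      have hmem : ∀ i ∈ (Finset.univ : Finset (Fin k)),
          g i ∈ D.filter fun u => (hammingGraph k).Adj v u := by
        intro i _
        refine Finset.mem_filter.mpr ⟨hgD i, ?_⟩
        have hle : hammingDist v (g i) ≤ 1 :=
          aux_dist_le_one (i := i) fun j hj => (hagree i j hj).symm
        have hne : hammingDist v (g i) ≠ 0 :=
          hammingDist_ne_zero.mpr fun h => (hgne i) h.symm
        exact aux_adj.mpr (by omega)
      have hinj : Set.InjOn g (Finset.univ : Finset (Fin k)) := by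
        intro i _ i' _ hii'
        by_contra hne
        apply hgne i
        funext j
        by_cases hj : j = i
        · have hji' : j ≠ i' := fun h => hne (hj ▸ h ▸ rfl)
          rw [hii']
          exact hagree i' j hji'
        · exact hagree i j hj
      calc k = (Finset.univ : Finset (Fin k)).card := by simp
        _ ≤ (D.filter fun u => (hammingGraph k).Adj v u).card :=
            Finset.card_le_card_of_injOn g hmem hinj
end
end

section
/- Let H be a hyperoval (a set of q+2 points meeting every line in 0 or 2 points) in a projective plane of order q with q even, q > 2, and let G be the point-line incidence graph of the plane. Then the set D consisting of the points of H together with the lines meeting H in 0 points is a 2-dominating independent set of G. -/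
open Finset
open scoped Classical

noncomputable section

/-- The point-line incidence graph of an incidence geometry: vertices are the points
and the lines, a point being adjacent to a line iff it lies on it. -/
def incGraph (P L : Type*) [Membership P L] : SimpleGraph (P ⊕ L) :=
  SimpleGraph.fromRel fun u v =>
    match u, v with
    | Sum.inl p, Sum.inr l => p ∈ l
    | _, _ => False

lemma incGraph_adj {P L : Type*} [Membership P L] (p : P) (l : L) :
    (incGraph P L).Adj (Sum.inl p) (Sum.inr l) ↔ p ∈ l := by
  simp [incGraph, SimpleGraph.fromRel_adj]

lemma incGraph_adj' {P L : Type*} [Membership P L] (p : P) (l : L) :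
    (incGraph P L).Adj (Sum.inr l) (Sum.inl p) ↔ p ∈ l := by
  simp [incGraph, SimpleGraph.fromRel_adj]

lemma incGraph_not_adj_ll {P L : Type*} [Membership P L] (l l' : L) :
    ¬ (incGraph P L).Adj (Sum.inr l) (Sum.inr l') := by
  simp [incGraph, SimpleGraph.fromRel_adj]

lemma incGraph_not_adj_pp {P L : Type*} [Membership P L] (p p' : P) :
    ¬ (incGraph P L).Adj (Sum.inl p) (Sum.inl p') := by
  simp [incGraph, SimpleGraph.fromRel_adj]

/-- In a projective plane of even order q > 2, the points of a hyperoval together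
with the lines skew to it form a 2-dominating independent set of the incidence graph. -/
theorem hyperoval_2DIS {P L : Type*} [Membership P L] [Fintype P] [Fintype L]
    [Configuration.ProjectivePlane P L] (q : ℕ)
    (hq : Configuration.ProjectivePlane.order P L = q) (hqe : Even q) (hq2 : 2 < q)
    (H : Finset P) (hcard : H.card = q + 2)
    (hline : ∀ l : L, (H.filter fun p => p ∈ l).card = 0 ∨
                      (H.filter fun p => p ∈ l).card = 2) :
    IsKDIS (incGraph P L) 2
      ((H.image Sum.inl) ∪
        (((univ : Finset L).filter fun l => ∀ p ∈ H, p ∉ l).image Sum.inr)) := by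
  set D : Finset (P ⊕ L) := (H.image Sum.inl) ∪
      (((univ : Finset L).filter fun l => ∀ p ∈ H, p ∉ l).image Sum.inr) with hD
  have hmemD : ∀ v : P ⊕ L, v ∈ D ↔
      (∃ p ∈ H, Sum.inl p = v) ∨ (∃ l : L, (∀ p ∈ H, p ∉ l) ∧ Sum.inr l = v) := by
    intro v
    simp [hD, mem_union, mem_image, mem_filter]
  constructor
  · rintro u hu v hv hadj
    rw [hmemD] at hu hv
    rcases hu with ⟨p, hp, rfl⟩ | ⟨l, hl, rfl⟩ <;>
      rcases hv with ⟨p', hp', rfl⟩ | ⟨l', hl', rfl⟩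
    · exact incGraph_not_adj_pp p p' hadj
    · exact hl' p hp ((incGraph_adj p l').mp hadj)
    · exact hl p' hp' ((incGraph_adj' p' l).mp hadj)
    · exact incGraph_not_adj_ll l l' hadj
  · rintro (p | l) hv
    · -- v = inl p, p ∉ H; count skew lines through p
      have hpH : p ∉ H := fun h => hv ((hmemD _).mpr (Or.inl ⟨p, h, rfl⟩))
      set S : Finset L := univ.filter fun l => p ∈ l ∧ (H.filter fun x => x ∈ l).card = 2
        with hS
      set K : Finset L := univ.filter fun l => p ∈ l ∧ ∀ x ∈ H, x ∉ l with hK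
      -- lines through p split into S and K
      have hsplit : (univ.filter fun l : L => p ∈ l) = S ∪ K := by
        ext l
        simp only [hS, hK, mem_filter, mem_union, mem_univ, true_and]
        constructor
        · intro hpl
          rcases hline l with h0 | h2
          · exact Or.inr ⟨hpl, fun x hx hxl => by
              have : x ∈ H.filter fun y => y ∈ l := mem_filter.mpr ⟨hx, hxl⟩
              simp [card_eq_zero.mp h0] at this⟩
          · exact Or.inl ⟨hpl, h2⟩
        · rintro (⟨h, _⟩ | ⟨h, _⟩) <;> exact h
      have hdisj : Disjoint S K := by
        rw [disjoint_left]
        intro l hl hl'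
        simp only [hS, hK, mem_filter] at hl hl'
        obtain ⟨x, hx⟩ := card_pos.mp (by rw [hl.2.2]; norm_num)
        rw [mem_filter] at hx
        exact hl'.2.2 x hx.1 hx.2
      -- number of lines through p is q+1
      have hcount : (univ.filter fun l : L => p ∈ l).card = q + 1 := by
        have := Configuration.ProjectivePlane.lineCount_eq L p
        rw [hq] at this
        rw [← this, Configuration.lineCount, Nat.card_eq_fintype_card,
          Fintype.card_subtype]
      -- 2 * S.card ≤ q + 2
      have hSle : 2 * S.card ≤ q + 2 := by
        have hsub : S.biUnion (fun l => H.filter fun x => x ∈ l) ⊆ H := by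
          intro x hx
          obtain ⟨l, _, hxl⟩ := mem_biUnion.mp hx
          exact (mem_filter.mp hxl).1
        have hpair : ∀ l ∈ S, ∀ l' ∈ S, l ≠ l' →
            Disjoint (H.filter fun x => x ∈ l) (H.filter fun x => x ∈ l') := by
          intro l hl l' hl' hne
          rw [disjoint_left]
          intro x hx hx'
          rw [mem_filter] at hx hx'
          simp only [hS, mem_filter] at hl hl'
          have hxp : x ≠ p := fun h => hpH (h ▸ hx.1)
          rcases Configuration.Nondegenerate.eq_or_eq (P := P) (L := L)
            hx.2 hl.2.1 hx'.2 hl'.2.1 with h | h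
          · exact hxp h
          · exact hne h
        have := Finset.card_biUnion hpair
        calc 2 * S.card = ∑ l ∈ S, (H.filter fun x => x ∈ l).card := by
              rw [Finset.sum_congr rfl fun l hl => ((mem_filter.mp hl).2.2 : _),
                Finset.sum_const, smul_eq_mul, mul_comm]
          _ = (S.biUnion (fun l => H.filter fun x => x ∈ l)).card := this.symm
          _ ≤ H.card := card_le_card hsub
          _ = q + 2 := hcard
      -- so K.card ≥ 2
      have hcards : S.card + K.card = q + 1 := by
        rw [← card_union_of_disjoint hdisj, ← hsplit, hcount]
      have hK2 : 2 ≤ K.card := by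
        obtain ⟨m, rfl⟩ := hqe
        omega
      -- K.image inr is a subset of the filter
      refine le_trans ?_ (card_le_card (s := K.image Sum.inr) ?_)
      · rwa [card_image_of_injective _ Sum.inr_injective]
      · intro v hvv
        obtain ⟨l, hl, rfl⟩ := mem_image.mp hvv
        simp only [hK, mem_filter, mem_univ, true_and] at hl
        refine mem_filter.mpr ⟨(hmemD _).mpr (Or.inr ⟨l, hl.2, rfl⟩), ?_⟩
        exact (incGraph_adj p l).mpr hl.1
    · -- v = inr l, l not skew, so l is a secant
      have hns : ¬ ∀ x ∈ H, x ∉ l := by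
        intro h
        exact hv ((hmemD _).mpr (Or.inr ⟨l, h, rfl⟩))
      have h2 : (H.filter fun x => x ∈ l).card = 2 := by
        rcases hline l with h0 | h2
        · exact absurd (fun x hx hxl => by
            have : x ∈ H.filter fun y => y ∈ l := mem_filter.mpr ⟨hx, hxl⟩
            simp [card_eq_zero.mp h0] at this) hns
        · exact h2
      refine le_trans ?_ (card_le_card
        (s := (H.filter fun x => x ∈ l).image Sum.inl) ?_)
      · rw [card_image_of_injective _ Sum.inl_injective, h2]
      · intro v hvv
        obtain ⟨x, hx, rfl⟩ := mem_image.mp hvv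
        rw [mem_filter] at hx
        refine mem_filter.mpr ⟨(hmemD _).mpr (Or.inl ⟨x, hx.1, rfl⟩), ?_⟩
        exact (incGraph_adj' x l).mpr hx.2
end
end
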